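/- arXiv:math/0104063 — 2 statements merged into one kernel-verified Lean document; each statement's English description precedes it below -/
import Mathlib

section
/- In the ring of formal power series ℤ⟦t⟧, (1 − t)^{d+1} · Σ_{n ≥ 0} χ_G(n) t^n = Σ_{π ∈ S_d} t^{c(π)}, where the right-hand sum is over all permutations π of [d] and c(π) is the number of cuts of π with respect to G. -/
/-- `ellSpec G a k p` says that there are positions `i₁ < i₂ < ⋯ < i_p < i_{p+1} = k`
such that `a_{i_j}` and `a_{i_{j+1}}` are adjacent in `G` for all `j`. -/
def ellSpec {d : ℕ} (G : SimpleGraph (Fin d)) (a : Equiv.Perm (Fin d)) (k : Fin d)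
    (p : ℕ) : Prop :=
  ∃ c : Fin (p + 1) → Fin d, StrictMono c ∧ c (Fin.last p) = k ∧
    ∀ j : Fin p, G.Adj (a (c j.castSucc)) (a (c j.succ))

/-- `ell G a k` is the largest `p` such that `ellSpec G a k p` holds: the length of the
longest increasing path in `a` ending at position `k`. -/
noncomputable def ell {d : ℕ} (G : SimpleGraph (Fin d)) (a : Equiv.Perm (Fin d))
    (k : Fin d) : ℕ :=
  sSup {p | ellSpec G a k p}

/-- `j` is a cut of `a` (with respect to `G`): either `j` is the first position, or
comparing with the preceding position `i` we have `ℓ(i) < ℓ(j)`, or `ℓ(i) = ℓ(j)` and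
`a_i < a_j`.  (Cuts are located at the first position of each block; this is the
0-indexed version of the paper's cuts `k ∈ [0, d-1]`.) -/
noncomputable def IsCut {d : ℕ} (G : SimpleGraph (Fin d)) (a : Equiv.Perm (Fin d))
    (j : Fin d) : Prop :=
  (j : ℕ) = 0 ∨ ∃ i : Fin d, (i : ℕ) + 1 = (j : ℕ) ∧
    (ell G a i < ell G a j ∨ (ell G a i = ell G a j ∧ a i < a j))

/-- `c(π)`: the number of cuts of the permutation `a` with respect to `G`. -/
noncomputable def numCuts {d : ℕ} (G : SimpleGraph (Fin d))
    (a : Equiv.Perm (Fin d)) : ℕ :=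
  Nat.card {j : Fin d // IsCut G a j}

/-- `χ_G(n)`: the number of proper colorings of `G` with color set `{1, …, n}`. -/
noncomputable def chromVal {d : ℕ} (G : SimpleGraph (Fin d)) (n : ℕ) : ℕ :=
  Nat.card {φ : Fin d → Fin n // ∀ u v : Fin d, G.Adj u v → φ u ≠ φ v}

/-!
Sort the vertices of a proper colouring `φ` by colour, breaking ties inside a colour class by
decreasing `(ℓ v, v)`, where `ℓ v` is the length of the longest `G`-path ending at `v` along
which `φ` strictly increases. For the resulting permutation `π`, the position statistic `ℓ_π`
is `ℓ ∘ π`, so inside a colour class no position is a cut: `φ ∘ π` is weakly increasing and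
strictly increasing into every cut of `π`. Conversely every such pair `(π, f)` comes from the
proper colouring `f ∘ π⁻¹`, because an edge between positions `i < j` forces `ℓ_π i < ℓ_π j`,
which cannot happen along a stretch of non-cuts. Adding to `f` the number of non-cuts up to
each position makes it strictly increasing into `n + d - c(π)` values, hence
`χ_G(n) = ∑_π (n + d - c(π)).choose d`, while `∑ₙ (n + d - c).choose d tⁿ = t^c / (1 - t)^(d+1)`.
-/

namespace ChromaticCuts

open Finset

variable {d : ℕ}

section Consecutive

variable {α : Type*} [Preorder α]

lemma monotone_iff_forall_succ_eq {f : Fin d → α} :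
    Monotone f ↔ ∀ i j : Fin d, (i : ℕ) + 1 = j → f i ≤ f j := by
  refine ⟨fun hf i j h => hf (Fin.le_def.2 (by omega)), fun h => ?_⟩
  cases d with
  | zero => exact fun i => i.elim0
  | succ e => exact Fin.monotone_iff_le_succ.2 fun t => h _ _ (by simp)

lemma strictMono_iff_forall_succ_eq {f : Fin d → α} :
    StrictMono f ↔ ∀ i j : Fin d, (i : ℕ) + 1 = j → f i < f j := by
  refine ⟨fun hf i j h => hf (Fin.lt_def.2 (by omega)), fun h => ?_⟩
  cases d with
  | zero => exact fun i => i.elim0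
  | succ e => exact Fin.strictMono_iff_lt_succ.2 fun t => h _ _ (by simp)

lemma val_le_of_strictMono {m : ℕ} {g : Fin d → Fin m} (hg : StrictMono g) (j : Fin d) :
    (j : ℕ) ≤ g j := by
  have := card_le_card_of_injOn g (s := Iic j) (t := Iic (g j))
    (fun i hi => by simpa using hg.monotone (by simpa using hi)) hg.injective.injOn
  simpa [Fin.card_Iic] using this

lemma val_add_le_of_strictMono {m : ℕ} {g : Fin d → Fin m} (hg : StrictMono g) (j : Fin d) :
    (g j : ℕ) + (d - j) ≤ m := by
  have := card_le_card_of_injOn g (s := Ici j) (t := Ici (g j))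
    (fun i hi => by simpa using hg.monotone (by simpa using hi)) hg.injective.injOn
  simp only [Fin.card_Ici] at this
  omega

end Consecutive

section Counting

variable {β : Type*} [Preorder β] (S : Fin d → Prop)

def MonotoneStrictAt (f : Fin d → β) : Prop :=
  ∀ i j : Fin d, (i : ℕ) + 1 = j → f i ≤ f j ∧ (S j → f i < f j)

variable {S}

lemma MonotoneStrictAt.monotone {f : Fin d → β} (hf : MonotoneStrictAt S f) : Monotone f :=
  monotone_iff_forall_succ_eq.2 fun i j h => (hf i j h).1

variable (S) [DecidablePred S]

def weakCount (j : Fin d) : ℕ := #{i ∈ Iic j | ¬S i}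

lemma weakCount_of_succ_eq {i j : Fin d} (h : (i : ℕ) + 1 = j) :
    weakCount S j = weakCount S i + if S j then 0 else 1 := by
  have hIic : Iic j = insert j (Iic i) := by
    ext k
    simp only [mem_Iic, mem_insert, Fin.le_def, Fin.ext_iff]
    omega
  have hj : j ∉ Iic i := by rw [mem_Iic, Fin.le_def]; omega
  rw [weakCount, weakCount, hIic, filter_insert]
  split_ifs <;> simp [hj]

lemma weakCount_le_card (j : Fin d) : weakCount S j ≤ #{i | ¬S i} :=
  card_le_card (filter_subset_filter _ (subset_univ _))

lemma weakCount_le_val (h0 : ∀ j : Fin d, (j : ℕ) = 0 → S j) (j : Fin d) :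
    weakCount S j ≤ j := by
  have := card_le_card_of_injOn (fun i : Fin d => (i : ℕ))
    (s := {i ∈ Iic j | ¬S i}) (t := Ioc 0 (j : ℕ))
    (fun i hi => by
      rw [mem_coe, mem_filter, mem_Iic] at hi
      rw [mem_coe, mem_Ioc]
      exact ⟨Nat.pos_of_ne_zero (mt (h0 i) hi.2), hi.1⟩)
    Fin.val_injective.injOn
  simpa [weakCount] using this

lemma weakCount_le_of_strictMono (h0 : ∀ j : Fin d, (j : ℕ) = 0 → S j) {m : ℕ}
    {g : Fin d → Fin m} (hg : StrictMono g) (j : Fin d) : weakCount S j ≤ g j :=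
  (weakCount_le_val S h0 j).trans (val_le_of_strictMono hg j)

lemma card_le_weakCount_add (j : Fin d) : #{i | ¬S i} ≤ weakCount S j + (d - 1 - j) := by
  calc #{i | ¬S i} ≤ #({i ∈ Iic j | ¬S i} ∪ Ioi j) := card_le_card fun i hi => by
        by_cases hij : i ≤ j <;> simp_all
    _ ≤ weakCount S j + (d - 1 - j) := by
        rw [← Fin.card_Ioi]
        exact card_union_le _ _

variable {S} {n : ℕ}

lemma monotoneStrictAt_iff_strictMono {f : Fin d → Fin n} :
    MonotoneStrictAt S f ↔ StrictMono fun j => (f j : ℕ) + weakCount S j := by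
  rw [strictMono_iff_forall_succ_eq]
  refine forall₂_congr fun i j => forall_congr' fun h => ?_
  rw [weakCount_of_succ_eq S h, Fin.le_def, Fin.lt_def]
  split_ifs with hS
  · simp only [hS, forall_const, add_zero]
    omega
  · simp only [hS, IsEmpty.forall_iff, and_true]
    omega

variable (S)

def monotoneStrictAtEquiv (h0 : ∀ j : Fin d, (j : ℕ) = 0 → S j) :
    {f : Fin d → Fin n // MonotoneStrictAt S f} ≃ (Fin d ↪o Fin (n + #{i | ¬S i})) where
  toFun f := OrderEmbedding.ofStrictMono
    (fun j => ⟨f.1 j + weakCount S j, by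
      have := (f.1 j).is_lt; have := weakCount_le_card S j; omega⟩)
    (monotoneStrictAt_iff_strictMono.1 f.2)
  invFun e := ⟨fun j => ⟨e j - weakCount S j, by
      have := val_add_le_of_strictMono e.strictMono j
      have := card_le_weakCount_add S j
      have := weakCount_le_of_strictMono S h0 e.strictMono j
      have := j.is_lt
      omega⟩, by
    rw [monotoneStrictAt_iff_strictMono]
    convert Fin.val_strictMono.comp e.strictMono using 2 with j
    exact Nat.sub_add_cancel (weakCount_le_of_strictMono S h0 e.strictMono j)⟩
  left_inv f := by ext j; exact Nat.add_sub_cancel (f.1 j : ℕ) (weakCount S j)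
  right_inv e := by
    ext j
    exact Nat.sub_add_cancel (weakCount_le_of_strictMono S h0 e.strictMono j)

theorem card_monotoneStrictAt (h0 : ∀ j : Fin d, (j : ℕ) = 0 → S j) :
    Nat.card {f : Fin d → Fin n // MonotoneStrictAt S f} = (n + #{i | ¬S i}).choose d := by
  rw [Nat.card_congr ((monotoneStrictAtEquiv S h0).trans Set.powersetCard.ofFinEmbEquiv),
    Set.powersetCard.card, Nat.card_eq_fintype_card, Fintype.card_fin]

end Counting

variable {G : SimpleGraph (Fin d)} {a : Equiv.Perm (Fin d)}

section Ell

variable {i j k : Fin d} {p : ℕ}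

lemma ellSpec_zero (k : Fin d) : ellSpec G a k 0 :=
  ⟨fun _ => k, Subsingleton.strictMono (α := Fin 1) _, rfl, fun j => j.elim0⟩

lemma ellSpec.lt (h : ellSpec G a k p) : p < d := by
  obtain ⟨c, hc, -, -⟩ := h
  simpa using Fintype.card_le_of_injective c hc.injective

lemma bddAbove_ellSpec : BddAbove {p | ellSpec G a k p} :=
  ⟨d, fun _ hp => (ellSpec.lt hp).le⟩

lemma ellSpec_ell : ellSpec G a k (ell G a k) :=
  Nat.sSup_mem ⟨0, ellSpec_zero k⟩ bddAbove_ellSpec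

lemma ellSpec.le_ell (h : ellSpec G a k p) : p ≤ ell G a k :=
  le_csSup bddAbove_ellSpec h

lemma ellSpec.snoc (h : ellSpec G a i p) (hij : i < j) (hadj : G.Adj (a i) (a j)) :
    ellSpec G a j (p + 1) := by
  obtain ⟨c, hc, rfl, hadjc⟩ := h
  refine ⟨Fin.snoc c j, Fin.strictMono_iff_lt_succ.2 fun t => ?_, by simp, fun t => ?_⟩
  · induction t using Fin.lastCases with
    | last => simpa using hij
    | cast s =>
      rw [Fin.succ_castSucc, Fin.snoc_castSucc, Fin.snoc_castSucc]
      exact hc Fin.castSucc_lt_succ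
  · induction t using Fin.lastCases with
    | last => simpa using hadj
    | cast s =>
      rw [Fin.succ_castSucc, Fin.snoc_castSucc, Fin.snoc_castSucc]
      exact hadjc s

lemma ell_lt_ell_of_adj (hij : i < j) (hadj : G.Adj (a i) (a j)) : ell G a i < ell G a j :=
  ellSpec.le_ell (ellSpec.snoc ellSpec_ell hij hadj)

lemma isCut_iff_of_succ_eq (h : (i : ℕ) + 1 = j) :
    IsCut G a j ↔ toLex (ell G a i, a i) < toLex (ell G a j, a j) := by
  rw [IsCut, Prod.Lex.toLex_lt_toLex]
  constructor
  · rintro (hj | ⟨i', hi', hlt⟩)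
    · omega
    · obtain rfl : i' = i := Fin.ext (by omega)
      exact hlt
  · exact fun hlt => Or.inr ⟨i, h, hlt⟩

lemma ell_le_of_not_isCut (h : (i : ℕ) + 1 = j) (hj : ¬IsCut G a j) : ell G a j ≤ ell G a i :=
  Prod.Lex.monotone_fst _ _ (not_lt.1 (mt (isCut_iff_of_succ_eq h).2 hj))

lemma ell_le_of_forall_not_isCut (hij : i ≤ j) (h : ∀ k, i < k → k ≤ j → ¬IsCut G a k) :
    ell G a j ≤ ell G a i := by
  suffices ∀ m, (i : ℕ) ≤ m → ∀ hm : m < d,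
      (∀ k : Fin d, i < k → (k : ℕ) ≤ m → ¬IsCut G a k) → ell G a ⟨m, hm⟩ ≤ ell G a i from
    this j hij j.2 h
  intro m him
  induction m, him using Nat.le_induction with
  | base => exact fun _ _ => le_rfl
  | succ m him ih =>
    intro hm h
    calc ell G a ⟨m + 1, hm⟩ ≤ ell G a ⟨m, by omega⟩ :=
          ell_le_of_not_isCut rfl (h _ (Fin.lt_def.2 (by simp; omega)) le_rfl)
      _ ≤ ell G a i := ih _ fun k hik hkm => h k hik (by omega)

end Ell

section Coloring

variable {β : Type*} [LinearOrder β] {φ : Fin d → β}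

def colorEllSpec (G : SimpleGraph (Fin d)) (φ : Fin d → β) (v : Fin d) (p : ℕ) : Prop :=
  ∃ b : Fin (p + 1) → Fin d, b (Fin.last p) = v ∧
    ∀ j : Fin p, G.Adj (b j.castSucc) (b j.succ) ∧ φ (b j.castSucc) < φ (b j.succ)

noncomputable def colorEll (G : SimpleGraph (Fin d)) (φ : Fin d → β) (v : Fin d) : ℕ :=
  sSup {p | colorEllSpec G φ v p}

lemma ellSpec_iff_colorEllSpec (hmono : Monotone (φ ∘ a))
    (hφ : ∀ u v, G.Adj u v → φ u ≠ φ v) (k : Fin d) (p : ℕ) :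
    ellSpec G a k p ↔ colorEllSpec G φ (a k) p := by
  constructor
  · rintro ⟨c, hc, rfl, hadj⟩
    exact ⟨a ∘ c, rfl, fun t => ⟨hadj t,
      (hmono (hc Fin.castSucc_lt_succ).le).lt_of_ne (hφ _ _ (hadj t))⟩⟩
  · rintro ⟨b, hb, hbφ⟩
    refine ⟨a.symm ∘ b, Fin.strictMono_iff_lt_succ.2 fun t => ?_, by simp [hb], fun t => ?_⟩
    · exact lt_of_not_ge fun hle => (hbφ t).2.not_ge (by simpa using hmono hle)
    · simpa using (hbφ t).1

lemma ell_eq_colorEll (hmono : Monotone (φ ∘ a)) (hφ : ∀ u v, G.Adj u v → φ u ≠ φ v)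
    (k : Fin d) : ell G a k = colorEll G φ (a k) :=
  congrArg sSup (Set.ext (ellSpec_iff_colorEllSpec hmono hφ k))

-- Inside a colour class the non-cuts are the descents of `(ℓ, label)`, hence the dual order.
noncomputable def sortKey (G : SimpleGraph (Fin d)) (φ : Fin d → β) (v : Fin d) :
    β ×ₗ (ℕ ×ₗ Fin d)ᵒᵈ :=
  toLex (φ v, OrderDual.toDual (toLex (colorEll G φ v, v)))

lemma sortKey_lt_sortKey_iff {u v : Fin d} :
    sortKey G φ u < sortKey G φ v ↔
      φ u < φ v ∨ φ u = φ v ∧ toLex (colorEll G φ v, v) < toLex (colorEll G φ u, u) := by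
  rw [sortKey, sortKey, Prod.Lex.toLex_lt_toLex, OrderDual.toDual_lt_toDual]

lemma sortKey_injective : Function.Injective (sortKey G φ) := fun u v h => by
  simpa [sortKey] using congrArg (fun x => (ofLex (OrderDual.ofDual (ofLex x).2)).2) h

noncomputable def sortPerm (G : SimpleGraph (Fin d)) (φ : Fin d → β) : Equiv.Perm (Fin d) :=
  Tuple.sort (sortKey G φ)

lemma strictMono_sortKey_comp_sortPerm : StrictMono (sortKey G φ ∘ sortPerm G φ) :=
  (Tuple.monotone_sort _).strictMono_of_injective (sortKey_injective.comp (Equiv.injective _))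

lemma sortPerm_eq_of_strictMono (h : StrictMono (sortKey G φ ∘ a)) : sortPerm G φ = a :=
  (Tuple.eq_sort_iff.2 ⟨h.monotone, fun _ _ hij he => absurd he (h hij).ne⟩).symm

lemma monotoneStrictAt_of_strictMono_sortKey (hφ : ∀ u v, G.Adj u v → φ u ≠ φ v)
    (h : StrictMono (sortKey G φ ∘ a)) : MonotoneStrictAt (IsCut G a) (φ ∘ a) := by
  have hmono : Monotone (φ ∘ a) := fun _ _ hij => Prod.Lex.monotone_fst _ _ (h.monotone hij)
  intro i j hij
  have hij' : i < j := Fin.lt_def.2 (by omega)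
  rcases sortKey_lt_sortKey_iff.1 (h hij') with hlt | ⟨heq, hlex⟩
  · exact ⟨hlt.le, fun _ => hlt⟩
  · refine ⟨heq.le, fun hcut => absurd hlex ?_⟩
    rw [isCut_iff_of_succ_eq hij, ell_eq_colorEll hmono hφ, ell_eq_colorEll hmono hφ] at hcut
    exact hcut.asymm

lemma proper_of_monotoneStrictAt {f : Fin d → β} (hf : MonotoneStrictAt (IsCut G a) f) :
    ∀ u v, G.Adj u v → f (a.symm u) ≠ f (a.symm v) := by
  suffices ∀ i j, i < j → G.Adj (a i) (a j) → f i ≠ f j by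
    intro u v huv
    rcases lt_trichotomy (a.symm u) (a.symm v) with hlt | heq | hgt
    · exact this _ _ hlt (by simpa using huv)
    · exact absurd (a.symm.injective heq) huv.ne
    · exact (this _ _ hgt (by simpa using huv.symm)).symm
  intro i j hij hadj hfij
  have hconst : ∀ k, i < k → k ≤ j → ¬IsCut G a k := fun k hik hkj hcut => by
    have hk' : (k : ℕ) - 1 + 1 = k := by rw [Fin.lt_def] at hik; omega
    have hstep : f ⟨k - 1, by omega⟩ < f k := (hf _ k hk').2 hcut
    have hik' : f i ≤ f ⟨k - 1, by omega⟩ := hf.monotone (Fin.le_def.2 (by simp; omega))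
    have hkj' : f k ≤ f j := hf.monotone hkj
    order
  exact (ell_lt_ell_of_adj hij hadj).not_ge (ell_le_of_forall_not_isCut hij.le hconst)

lemma strictMono_sortKey_of_monotoneStrictAt {f : Fin d → β}
    (hf : MonotoneStrictAt (IsCut G a) f) : StrictMono (sortKey G (f ∘ a.symm) ∘ a) := by
  have hφ := proper_of_monotoneStrictAt hf
  have hmono : Monotone ((f ∘ a.symm) ∘ a) := by simpa [Function.comp_def] using hf.monotone
  refine strictMono_iff_forall_succ_eq.2 fun i j hij => sortKey_lt_sortKey_iff.2 ?_
  obtain ⟨hle, hcut⟩ := hf i j hij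
  simp only [Function.comp_apply, Equiv.symm_apply_apply]
  rcases hle.lt_or_eq with hlt | heq
  · exact Or.inl hlt
  · refine Or.inr ⟨heq, ?_⟩
    have hncut : ¬IsCut G a j := fun h => (hcut h).ne heq
    rw [isCut_iff_of_succ_eq hij, ell_eq_colorEll hmono hφ, ell_eq_colorEll hmono hφ] at hncut
    refine (not_lt.1 hncut).lt_of_ne fun h => ?_
    have hji : j = i := a.injective (congrArg (fun x => (ofLex x).2) h)
    omega

end Coloring

section Chromatic

variable {β : Type*} [LinearOrder β]

noncomputable def sortPermFiberEquiv (a : Equiv.Perm (Fin d)) :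
    {φ : {φ : Fin d → β // ∀ u v, G.Adj u v → φ u ≠ φ v} // sortPerm G φ.1 = a} ≃
      {f : Fin d → β // MonotoneStrictAt (IsCut G a) f} where
  toFun φ := ⟨φ.1.1 ∘ a, by
    obtain ⟨⟨φ, hφ⟩, rfl⟩ := φ
    exact monotoneStrictAt_of_strictMono_sortKey hφ strictMono_sortKey_comp_sortPerm⟩
  invFun f := ⟨⟨f.1 ∘ a.symm, proper_of_monotoneStrictAt f.2⟩,
    sortPerm_eq_of_strictMono (strictMono_sortKey_of_monotoneStrictAt f.2)⟩
  left_inv φ := by ext v; simp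
  right_inv f := by ext i; simp

lemma card_filter_not_isCut (a : Equiv.Perm (Fin d)) [DecidablePred (IsCut G a)] :
    #{j | ¬IsCut G a j} = d - numCuts G a := by
  rw [← Fintype.card_subtype, Fintype.card_subtype_compl, Fintype.card_fin, numCuts,
    Nat.card_eq_fintype_card]

lemma numCuts_le (a : Equiv.Perm (Fin d)) : numCuts G a ≤ d := by
  simpa [numCuts] using Finite.card_subtype_le (IsCut G a)

theorem chromVal_eq_sum_choose (G : SimpleGraph (Fin d)) (n : ℕ) :
    chromVal G n = ∑ a : Equiv.Perm (Fin d), (n + (d - numCuts G a)).choose d := by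
  classical
  rw [chromVal, ← Nat.card_congr (Equiv.sigmaFiberEquiv fun φ => sortPerm G φ.1),
    Nat.card_sigma]
  refine Finset.sum_congr rfl fun a _ => ?_
  rw [Nat.card_congr (sortPermFiberEquiv a), card_monotoneStrictAt (IsCut G a) fun _ => Or.inl,
    card_filter_not_isCut]

end Chromatic

open PowerSeries in
lemma one_sub_X_pow_mul_mk_choose {R : Type*} [CommRing R] {c : ℕ} (hc : c ≤ d) :
    (1 - X : R⟦X⟧) ^ (d + 1) * PowerSeries.mk (fun n => ((n + (d - c)).choose d : R)) =
      X ^ c := by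
  have hmk : PowerSeries.mk (fun n => ((n + (d - c)).choose d : R)) =
      X ^ c * PowerSeries.mk fun n => ((d + n).choose d : R) := by
    ext n
    rw [coeff_mk, coeff_X_pow_mul', coeff_mk]
    split_ifs with hcn
    · congr 2
      omega
    · rw [Nat.choose_eq_zero_of_lt (by omega), Nat.cast_zero]
  rw [hmk, mul_left_comm, mul_comm ((1 - X : R⟦X⟧) ^ (d + 1)),
    mk_add_choose_mul_one_sub_pow_eq_one, mul_one]

end ChromaticCuts

theorem w_transform_chromatic_general {d : ℕ} (G : SimpleGraph (Fin d)) :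
    (1 - PowerSeries.X : PowerSeries ℤ) ^ (d + 1) *
      PowerSeries.mk (fun n => (chromVal G n : ℤ)) =
    ∑ π : Equiv.Perm (Fin d), (PowerSeries.X : PowerSeries ℤ) ^ numCuts G π := by
  have hχ : PowerSeries.mk (fun n => (chromVal G n : ℤ)) =
      ∑ π : Equiv.Perm (Fin d),
        PowerSeries.mk fun n => ((n + (d - numCuts G π)).choose d : ℤ) := by
    ext n
    simp [ChromaticCuts.chromVal_eq_sum_choose, map_sum]
  rw [hχ, Finset.mul_sum]
  exact Finset.sum_congr rfl fun π _ =>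
    ChromaticCuts.one_sub_X_pow_mul_mk_choose (ChromaticCuts.numCuts_le π)

/-- In `ℤ⟦t⟧` one has
`(1 − t)^{d+1} · Σ_{n ≥ 0} χ_G(n) tⁿ = Σ_{π ∈ S_d} t^{c(π)}`. -/
theorem w_transform_chromatic {d : ℕ} (hd : 1 ≤ d) (G : SimpleGraph (Fin d)) :
    (1 - PowerSeries.X : PowerSeries ℤ) ^ (d + 1) *
      PowerSeries.mk (fun n => (chromVal G n : ℤ)) =
    ∑ π : Equiv.Perm (Fin d), (PowerSeries.X : PowerSeries ℤ) ^ numCuts G π :=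
  w_transform_chromatic_general G
end

section
/- Let D_1, …, D_m be an ordered partition of [d] into nonempty stable sets of G. Then there is exactly one permutation π = a_1 a_2 ⋯ a_d of [d] such that (i) the sets D_1, …, D_m occupy consecutive blocks of positions in this order (D_i = {a_{t_{i−1}+1}, …, a_{t_i}} where t_i = |D_1| + ⋯ + |D_i|), and (ii) no position k with a_k and a_{k+1} in the same block D_i is a cut of π; equivalently, within each block consecutive letters satisfy ℓ_π(k) > ℓ_π(k+1), or ℓ_π(k) = ℓ_π(k+1) and a_k > a_{k+1}. -/
open Finset Function OrderDual

theorem Tuple.existsUnique_perm_strictMono_comp {n : ℕ} {α : Type*} [LinearOrder α]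
    {f : Fin n → α} (hf : Injective f) : ∃! σ : Equiv.Perm (Fin n), StrictMono (f ∘ σ) :=
  ⟨sort f, (monotone_sort f).strictMono_of_injective (hf.comp (sort f).injective),
    fun _ hσ => Equiv.ext fun k => hf (congrFun (unique_monotone hσ.monotone (monotone_sort f)) k)⟩

theorem Fin.strictMono_of_forall_lt_of_val_add_one_eq {n : ℕ} {α : Type*} [Preorder α]
    {f : Fin n → α} (h : ∀ k k' : Fin n, (k : ℕ) + 1 = k' → f k < f k') : StrictMono f := by
  cases n with
  | zero => exact Subsingleton.strictMono f
  | succ n => exact Fin.strictMono_iff_lt_succ.2 fun k => h _ _ (by simp)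

section PathHeight

variable {α : Type*} [Fintype α] {R : α → α → Prop} [DecidableRel R]

/-- The number of edges of a longest `R`-path ending at `x`. -/
noncomputable def pathHeight (hR : WellFounded R) : α → ℕ :=
  hR.fix fun x ih => (univ.filter (R · x)).attach.sup fun y => ih y (mem_filter.1 y.2).2 + 1

theorem pathHeight_eq (hR : WellFounded R) (x : α) :
    pathHeight hR x = (univ.filter (R · x)).sup (pathHeight hR · + 1) := by
  rw [pathHeight, hR.fix_eq]
  exact sup_attach _ (pathHeight hR · + 1)

theorem eq_pathHeight_of_eq_sup (hR : WellFounded R) {h : α → ℕ}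
    (hh : ∀ x, h x = (univ.filter (R · x)).sup (h · + 1)) : h = pathHeight hR := by
  funext x
  induction x using hR.induction with
  | _ x ih =>
    rw [hh, pathHeight_eq]
    exact sup_congr rfl fun y hy => by rw [ih y (mem_filter.1 hy).2]

theorem pathHeight_apply_equiv {β : Type*} [Fintype β] {S : β → β → Prop} [DecidableRel S]
    (hR : WellFounded R) (hS : WellFounded S) (e : α ≃ β) (he : ∀ x y, R x y ↔ S (e x) (e y))
    (x : α) : pathHeight hS (e x) = pathHeight hR x := by
  refine congrFun (eq_pathHeight_of_eq_sup (h := fun x => pathHeight hS (e x)) hR fun x => ?_) x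
  have hmap : univ.filter (S · (e x)) = (univ.filter (R · x)).map e.toEmbedding := by
    ext y
    obtain ⟨y, rfl⟩ := e.surjective y
    simp [he]
  rw [pathHeight_eq, hmap, sup_map]
  rfl

end PathHeight

section Ell

variable {d : ℕ} {G : SimpleGraph (Fin d)} {a : Equiv.Perm (Fin d)} {k : Fin d} {p : ℕ}

theorem ellSpec_zero : ellSpec G a k 0 :=
  ⟨fun _ => k, Fin.strictMono_iff_lt_succ.2 fun j => j.elim0, rfl, fun j => j.elim0⟩

theorem ellSpec.lt (h : ellSpec G a k p) : p < d := by
  obtain ⟨c, hc, -, -⟩ := h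
  simpa using Fin.le_of_injective c hc.injective

theorem bddAbove_ellSpec : BddAbove {p | ellSpec G a k p} :=
  ⟨d, fun _ hp => hp.lt.le⟩

theorem ellSpec_ell : ellSpec G a k (ell G a k) :=
  Nat.sSup_mem ⟨0, ellSpec_zero⟩ bddAbove_ellSpec

theorem ellSpec.le_ell (h : ellSpec G a k p) : p ≤ ell G a k :=
  le_csSup bddAbove_ellSpec h

theorem ellSpec_succ_iff :
    ellSpec G a k (p + 1) ↔ ∃ i, i < k ∧ G.Adj (a i) (a k) ∧ ellSpec G a i p := by
  constructor
  · rintro ⟨c, hc, rfl, hadj⟩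
    refine ⟨c (Fin.last p).castSucc, hc (Fin.castSucc_lt_last _), ?_,
      c ∘ Fin.castSucc, hc.comp Fin.strictMono_castSucc, rfl, fun j => ?_⟩
    · simpa using hadj (Fin.last p)
    · simpa using hadj j.castSucc
  · rintro ⟨i, hik, hadj, c, hc, rfl, hcadj⟩
    refine ⟨Fin.snoc c k, ?_, by simp, fun j => ?_⟩
    · simpa [Fin.insertNth_last'] using Fin.strictMono_insertNth_last hc k hik
    · induction j using Fin.lastCases with
      | last => simpa using hadj
      | cast j => simpa only [Fin.succ_castSucc, Fin.snoc_castSucc] using hcadj j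

variable (G a) in
open Classical in
theorem ell_eq_sup (k : Fin d) :
    ell G a k = (univ.filter fun i => i < k ∧ G.Adj (a i) (a k)).sup (ell G a · + 1) := by
  refine le_antisymm ?_ (Finset.sup_le fun i hi => ?_)
  · rcases hq : ell G a k with _ | q
    · exact Nat.zero_le _
    · obtain ⟨i, hik, hadj, hi⟩ := ellSpec_succ_iff.1 (hq ▸ ellSpec_ell)
      exact le_sup_of_le (mem_filter.2 ⟨mem_univ _, hik, hadj⟩) (Nat.add_le_add_right hi.le_ell 1)
  · obtain ⟨hik, hadj⟩ := (mem_filter.1 hi).2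
    exact (ellSpec_succ_iff.2 ⟨i, hik, hadj, ellSpec_ell⟩).le_ell

end Ell

open Classical in
theorem ell_eq_pathHeight {d : ℕ} (G : SimpleGraph (Fin d)) (a : Equiv.Perm (Fin d)) :
    ell G a = pathHeight (R := fun i k => i < k ∧ G.Adj (a i) (a k))
      (Subrelation.wf And.left wellFounded_lt) :=
  eq_pathHeight_of_eq_sup _ (ell_eq_sup G a)

section OrderedPartition

variable {d m : ℕ} {G : SimpleGraph (Fin d)} {D : Fin m → Finset (Fin d)}
  (hpart : ∀ v, ∃! i, v ∈ D i)

def IsBlockOrdered (D : Fin m → Finset (Fin d)) (a : Equiv.Perm (Fin d)) : Prop :=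
  ∀ i k, a k ∈ D i ↔
    (∑ j ∈ univ.filter (· < i), #(D j)) ≤ k ∧ k < ∑ j ∈ univ.filter (· ≤ i), #(D j)

def HasNoCutInBlocks (G : SimpleGraph (Fin d)) (D : Fin m → Finset (Fin d))
    (a : Equiv.Perm (Fin d)) : Prop :=
  ∀ k k' : Fin d, (k : ℕ) + 1 = k' → (∃ i, a k ∈ D i ∧ a k' ∈ D i) →
    ell G a k' < ell G a k ∨ (ell G a k = ell G a k' ∧ a k' < a k)

noncomputable def blockOf (v : Fin d) : Fin m := (hpart v).choose

theorem mem_iff_blockOf_eq {v : Fin d} {i : Fin m} : v ∈ D i ↔ blockOf hpart v = i :=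
  ⟨fun h => ((hpart v).choose_spec.2 i h).symm, fun h => h ▸ (hpart v).choose_spec.1⟩

theorem card_filter_blockOf (P : Fin m → Prop) [DecidablePred P] :
    #(univ.filter fun v => P (blockOf hpart v)) = ∑ j ∈ univ.filter P, #(D j) := by
  rw [card_eq_sum_card_fiberwise (f := blockOf hpart) (t := univ.filter P)
    fun v hv => by simpa using hv]
  refine sum_congr rfl fun j hj => congrArg card ?_
  ext v
  simp only [mem_filter, mem_univ, true_and, mem_iff_blockOf_eq hpart] at hj ⊢
  grind

theorem isBlockOrdered_iff_monotone {a : Equiv.Perm (Fin d)} :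
    IsBlockOrdered D a ↔ Monotone (blockOf hpart ∘ a) := by
  constructor
  · intro h k k' hkk'
    by_contra! hlt
    have hk := (h _ k).1 ((mem_iff_blockOf_eq hpart).2 rfl)
    have hk' := (h _ k').1 ((mem_iff_blockOf_eq hpart).2 rfl)
    have hsub : univ.filter (· ≤ blockOf hpart (a k')) ⊆ univ.filter (· < blockOf hpart (a k)) :=
      fun j hj => by simpa using (mem_filter.1 hj).2.trans_lt hlt
    have hsum := sum_le_sum_of_subset (f := fun j => #(D j)) hsub
    have hkk'ℕ := Fin.le_def.1 hkk'
    omega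
  · intro hmono i k
    have hcard (P : Fin m → Prop) [DecidablePred P] :
        #(univ.filter fun k => P (blockOf hpart (a k))) = ∑ j ∈ univ.filter P, #(D j) :=
      (card_equiv a (by simp)).trans (card_filter_blockOf hpart P)
    have hlt : k < ∑ j ∈ univ.filter (· < i), #(D j) ↔ blockOf hpart (a k) < i := by
      rw [← hcard (· < i)]
      exact Tuple.lt_card_lt_iff_apply_lt_of_monotone hmono
    have hle : k < ∑ j ∈ univ.filter (· ≤ i), #(D j) ↔ blockOf hpart (a k) ≤ i := by
      rw [← hcard (· ≤ i)]
      exact Tuple.lt_card_le_iff_apply_le_of_monotone hmono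
    rw [mem_iff_blockOf_eq hpart, ← not_lt, hlt, hle, eq_iff_le_not_lt, and_comm]

theorem blockOf_ne_of_adj (hstable : ∀ i, ∀ u ∈ D i, ∀ v ∈ D i, ¬ G.Adj u v) {u v : Fin d}
    (h : G.Adj u v) : blockOf hpart u ≠ blockOf hpart v := fun he =>
  hstable _ u ((mem_iff_blockOf_eq hpart).2 rfl) v ((mem_iff_blockOf_eq hpart).2 he.symm) h

variable (G) in
open Classical in
noncomputable def blockHeight : Fin d → ℕ :=
  pathHeight (R := fun u v => G.Adj u v ∧ blockOf hpart u < blockOf hpart v)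
    (Subrelation.wf And.right (InvImage.wf (blockOf hpart) wellFounded_lt))

theorem ell_apply_eq_blockHeight (hstable : ∀ i, ∀ u ∈ D i, ∀ v ∈ D i, ¬ G.Adj u v)
    {a : Equiv.Perm (Fin d)} (hmono : Monotone (blockOf hpart ∘ a)) (k : Fin d) :
    ell G a k = blockHeight G hpart (a k) := by
  classical
  rw [ell_eq_pathHeight, blockHeight]
  refine (pathHeight_apply_equiv _ _ a (fun i k => ?_) k).symm
  constructor
  · rintro ⟨hik, hadj⟩
    exact ⟨hadj, (hmono hik.le).lt_of_ne (blockOf_ne_of_adj hpart hstable hadj)⟩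
  · rintro ⟨hadj, hlt⟩
    exact ⟨lt_of_not_ge fun hki => (hmono hki).not_gt hlt, hadj⟩

variable (G) in
noncomputable def sortKey (v : Fin d) : Fin m ×ₗ (ℕᵒᵈ ×ₗ (Fin d)ᵒᵈ) :=
  toLex (blockOf hpart v, toLex (toDual (blockHeight G hpart v), toDual v))

variable (G) in
theorem sortKey_injective : Injective (sortKey G hpart) := fun _ _ h => by
  simp only [sortKey, toLex_inj, Prod.mk.injEq, toDual_inj] at h
  exact h.2.2

theorem sortKey_lt_sortKey_iff {u v : Fin d} :
    sortKey G hpart u < sortKey G hpart v ↔ blockOf hpart u < blockOf hpart v ∨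
      blockOf hpart u = blockOf hpart v ∧ (blockHeight G hpart v < blockHeight G hpart u ∨
        blockHeight G hpart u = blockHeight G hpart v ∧ v < u) := by
  simp [sortKey, Prod.Lex.toLex_lt_toLex]

theorem isBlockOrdered_and_hasNoCutInBlocks_iff
    (hstable : ∀ i, ∀ u ∈ D i, ∀ v ∈ D i, ¬ G.Adj u v) (a : Equiv.Perm (Fin d)) :
    IsBlockOrdered D a ∧ HasNoCutInBlocks G D a ↔ StrictMono (sortKey G hpart ∘ a) := by
  rw [isBlockOrdered_iff_monotone hpart]
  constructor
  · rintro ⟨hmono, hcut⟩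
    refine Fin.strictMono_of_forall_lt_of_val_add_one_eq fun k k' hk =>
      (sortKey_lt_sortKey_iff hpart).2 ?_
    rcases (hmono (Fin.le_def.2 (by omega) : k ≤ k')).lt_or_eq with hlt | heq
    · exact Or.inl hlt
    · refine Or.inr ⟨heq, ?_⟩
      simpa only [ell_apply_eq_blockHeight hpart hstable hmono] using hcut k k' hk
        ⟨_, (mem_iff_blockOf_eq hpart).2 rfl, (mem_iff_blockOf_eq hpart).2 heq.symm⟩
  · intro hK
    have hmono : Monotone (blockOf hpart ∘ a) := fun k k' h =>
      Prod.Lex.monotone_fst_ofLex (hK.monotone h)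
    refine ⟨hmono, fun k k' hk ⟨i, hki, hk'i⟩ => ?_⟩
    rw [mem_iff_blockOf_eq hpart] at hki hk'i
    have hkk' : k < k' := Fin.lt_def.2 (by omega)
    rcases (sortKey_lt_sortKey_iff hpart).1 (hK hkk') with hlt | ⟨-, h⟩
    · exact absurd (hki.trans hk'i.symm) hlt.ne
    · simpa only [ell_apply_eq_blockHeight hpart hstable hmono] using h

end OrderedPartition

theorem existsUnique_perm_of_ordered_partition_general {d m : ℕ}
    (G : SimpleGraph (Fin d)) (D : Fin m → Finset (Fin d))
    (hstable : ∀ i, ∀ u ∈ D i, ∀ v ∈ D i, ¬ G.Adj u v)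
    (hpart : ∀ v : Fin d, ∃! i, v ∈ D i) :
    ∃! a : Equiv.Perm (Fin d),
      (∀ i : Fin m, ∀ k : Fin d,
        a k ∈ D i ↔ ((∑ j ∈ Finset.univ.filter (fun j => j < i), (D j).card) ≤ (k : ℕ) ∧
          (k : ℕ) < ∑ j ∈ Finset.univ.filter (fun j => j ≤ i), (D j).card)) ∧
      (∀ k k' : Fin d, (k : ℕ) + 1 = (k' : ℕ) → (∃ i, a k ∈ D i ∧ a k' ∈ D i) →
        (ell G a k' < ell G a k ∨ (ell G a k = ell G a k' ∧ a k' < a k))) :=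
  (existsUnique_congr (isBlockOrdered_and_hasNoCutInBlocks_iff hpart hstable)).2
    (Tuple.existsUnique_perm_strictMono_comp (sortKey_injective G hpart))

/-- Given an ordered partition `D 0, …, D (m-1)` of the vertex set of
`G` into nonempty stable sets, there is exactly one permutation `a` such that
(i) the sets occupy consecutive blocks of positions in the given order (the letters of
`D i` occupy the positions `k` with `|D 0| + ⋯ + |D (i-1)| ≤ k < |D 0| + ⋯ + |D i|`),
and (ii) no boundary between two consecutive positions inside a block is a cut, i.e.
within each block consecutive positions `k, k+1` satisfy `ℓ(k) > ℓ(k+1)`, or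
`ℓ(k) = ℓ(k+1)` and `a_k > a_{k+1}`. -/
theorem existsUnique_perm_of_ordered_partition {d m : ℕ} (hd : 1 ≤ d)
    (G : SimpleGraph (Fin d)) (D : Fin m → Finset (Fin d))
    (hne : ∀ i, (D i).Nonempty)
    (hstable : ∀ i, ∀ u ∈ D i, ∀ v ∈ D i, ¬ G.Adj u v)
    (hpart : ∀ v : Fin d, ∃! i, v ∈ D i) :
    ∃! a : Equiv.Perm (Fin d),
      (∀ i : Fin m, ∀ k : Fin d,
        a k ∈ D i ↔ ((∑ j ∈ Finset.univ.filter (fun j => j < i), (D j).card) ≤ (k : ℕ) ∧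
          (k : ℕ) < ∑ j ∈ Finset.univ.filter (fun j => j ≤ i), (D j).card)) ∧
      (∀ k k' : Fin d, (k : ℕ) + 1 = (k' : ℕ) → (∃ i, a k ∈ D i ∧ a k' ∈ D i) →
        (ell G a k' < ell G a k ∨ (ell G a k = ell G a k' ∧ a k' < a k))) :=
  existsUnique_perm_of_ordered_partition_general G D hstable hpart
end
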